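/- arXiv:math/0604152 — 3 statements merged into one kernel-verified Lean document; each statement's English description precedes it below -/
import Mathlib

section
/- Let K ⊂ D be a compact set of strictly minimal simple zeros of H. Then for every sufficiently small ε₁ > 0 there exists δ₁ > 0 such that for all (ζ,ω) ∈ K, H has no zeros in the set {(z,w) ∈ ℂ² : |z| = |ζ|, |arg(z/ζ)| ≥ ε₁, |w| ≤ (1+δ₁)·|ω|} (here |arg(z/ζ)| ≥ ε₁ means z = |z|e^{iθ}ζ/|ζ| for some θ with ε₁ ≤ |θ| ≤ π). -/
/-!
The points `(e^{iθ}ζ, w)` with `(ζ,ω) ∈ K`, `ε₁ ≤ |θ| ≤ π` and `|w| ≤ |ω|` form a compact set.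
Such a point lies in the closed polydisk of `(ζ,ω)` but differs from it, so by strict minimality
`H` has no zeros there. By the tube lemma, `H` stays zero-free on this set after the second
coordinate is scaled by any real factor close enough to `1`, which gives `δ₁`; so every `ε₀` works.
-/

open Complex Filter Topology

/-- The open polydisk centered at the origin in `ℂ²` with radii `R₁`, `R₂`. -/
def polyDisk (R₁ R₂ : ℝ) : Set (ℂ × ℂ) :=
  {p : ℂ × ℂ | ‖p.1‖ < R₁ ∧ ‖p.2‖ < R₂}

/-- `(ζ,ω)` is a strictly minimal simple zero of `H`: `H(ζ,ω) = 0`, the gradient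
`∇H(ζ,ω) ≠ 0`, `ζ·ω ≠ 0`, and `(ζ,ω)` is the only zero of `H` in the closed polydisk
`{|z| ≤ |ζ|, |w| ≤ |ω|}`. -/
def StrictlyMinimalSimpleZero (H : ℂ × ℂ → ℂ) (p : ℂ × ℂ) : Prop :=
  H p = 0 ∧ fderiv ℂ H p ≠ 0 ∧ p.1 * p.2 ≠ 0 ∧
    ∀ q : ℂ × ℂ, ‖q.1‖ ≤ ‖p.1‖ → ‖q.2‖ ≤ ‖p.2‖ →
      H q = 0 → q = p

theorem Complex.exp_ofReal_mul_I_ne_one {θ : ℝ} (hθ : θ ≠ 0) (hθπ : |θ| ≤ Real.pi) :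
    exp (θ * I) ≠ 1 := by
  intro h
  have hcos : Real.cos θ = 1 := by rw [← exp_ofReal_mul_I_re, h, one_re]
  have hπ := Real.pi_pos
  exact hθ ((Real.cos_eq_one_iff_of_lt_of_lt (by linarith [neg_abs_le θ])
    (by linarith [le_abs_self θ])).1 hcos)

theorem isCompact_setOf_le_abs_le (a b : ℝ) : IsCompact {x : ℝ | a ≤ |x| ∧ |x| ≤ b} :=
  (isCompact_Icc (a := -b) (b := b)).of_isClosed_subset
    ((isClosed_le continuous_const continuous_abs).inter
      (isClosed_le continuous_abs continuous_const))
    fun _ hx => abs_le.1 hx.2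

theorem IsCompact.eventually_forall_smul_snd_ne_zero {X E G : Type*} [TopologicalSpace X]
    [NormedAddCommGroup E] [NormedSpace ℝ E] [TopologicalSpace G] [T1Space G] [Zero G]
    {f : X × E → G} {Z : Set (X × E)} (hZ : IsCompact Z)
    (hf : ∀ q ∈ Z, ContinuousAt f q ∧ f q ≠ 0) :
    ∀ᶠ r : ℝ in 𝓝 1, ∀ q ∈ Z, f (q.1, r • q.2) ≠ 0 := by
  refine hZ.eventually_forall_of_forall_eventually fun q hq => ?_
  have hcont : ContinuousAt (fun x : ℝ × (X × E) => f (x.2.1, x.1 • x.2.2)) (1, q) := by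
    refine ContinuousAt.comp (g := f) (by simpa using (hf q hq).1) ?_
    fun_prop
  exact hcont.eventually_ne (by simpa using (hf q hq).2)

def rotatedArcDisk (K : Set (ℂ × ℂ)) (ε : ℝ) : Set (ℂ × ℂ) :=
  (fun x : (ℂ × ℂ) × ℝ × ℂ => (exp (x.2.1 * I) * x.1.1, x.2.2 * x.1.2)) ''
    (K ×ˢ {θ | ε ≤ |θ| ∧ |θ| ≤ Real.pi} ×ˢ Metric.closedBall 0 1)

theorem IsCompact.rotatedArcDisk {K : Set (ℂ × ℂ)} (hK : IsCompact K) (ε : ℝ) :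
    IsCompact (rotatedArcDisk K ε) :=
  (hK.prod ((isCompact_setOf_le_abs_le _ _).prod (isCompact_closedBall _ _))).image (by fun_prop)

theorem mem_rotatedArcDisk {K : Set (ℂ × ℂ)} {ε : ℝ} {p : ℂ × ℂ} (hp : p ∈ K) (hp₂ : p.2 ≠ 0)
    {θ : ℝ} (hεθ : ε ≤ |θ|) (hθπ : |θ| ≤ Real.pi) {w : ℂ} (hw : ‖w‖ ≤ ‖p.2‖) :
    (exp (θ * I) * p.1, w) ∈ rotatedArcDisk K ε := by
  refine ⟨(p, θ, w / p.2), ⟨hp, ⟨hεθ, hθπ⟩, ?_⟩, by simp [div_mul_cancel₀ w hp₂]⟩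
  rw [mem_closedBall_zero_iff, norm_div]
  exact div_le_one_of_le₀ hw (norm_nonneg _)

theorem exists_of_mem_rotatedArcDisk {K : Set (ℂ × ℂ)} {ε : ℝ} {q : ℂ × ℂ}
    (hq : q ∈ rotatedArcDisk K ε) :
    ∃ p ∈ K, ∃ θ : ℝ, ε ≤ |θ| ∧ |θ| ≤ Real.pi ∧ q.1 = exp (θ * I) * p.1 ∧ ‖q.2‖ ≤ ‖p.2‖ := by
  obtain ⟨⟨p, θ, t⟩, ⟨hp, ⟨hεθ, hθπ⟩, ht⟩, rfl⟩ := hq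
  refine ⟨p, hp, θ, hεθ, hθπ, rfl, ?_⟩
  rw [norm_mul]
  exact mul_le_of_le_one_left (norm_nonneg _) (mem_closedBall_zero_iff.1 ht)

theorem rotatedArcDisk_subset_polyDisk {K : Set (ℂ × ℂ)} {R₁ R₂ : ℝ}
    (hKD : K ⊆ polyDisk R₁ R₂) (ε : ℝ) : rotatedArcDisk K ε ⊆ polyDisk R₁ R₂ := by
  intro q hq
  obtain ⟨p, hp, θ, -, -, hq₁, hq₂⟩ := exists_of_mem_rotatedArcDisk hq
  have hq₁' : ‖q.1‖ = ‖p.1‖ := by rw [hq₁, norm_mul, norm_exp_ofReal_mul_I, one_mul]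
  exact ⟨hq₁'.trans_lt (hKD hp).1, hq₂.trans_lt (hKD hp).2⟩

theorem StrictlyMinimalSimpleZero.apply_exp_mul_ne_zero {H : ℂ × ℂ → ℂ} {p : ℂ × ℂ}
    (hp : StrictlyMinimalSimpleZero H p) {θ : ℝ} (hθ : θ ≠ 0) (hθπ : |θ| ≤ Real.pi) {w : ℂ}
    (hw : ‖w‖ ≤ ‖p.2‖) : H (exp (θ * I) * p.1, w) ≠ 0 := by
  intro h
  have hfix : exp (θ * I) * p.1 = p.1 :=
    congrArg Prod.fst (hp.2.2.2 _ (by rw [norm_mul, norm_exp_ofReal_mul_I, one_mul]) hw h)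
  exact exp_ofReal_mul_I_ne_one hθ hθπ
    (mul_right_cancel₀ (left_ne_zero_of_mul hp.2.2.1) (hfix.trans (one_mul _).symm))

theorem stmt0_general (R₁ R₂ : ℝ) (H : ℂ × ℂ → ℂ)
    (hH : AnalyticOnNhd ℂ H (polyDisk R₁ R₂))
    (K : Set (ℂ × ℂ)) (hKcpt : IsCompact K) (hKD : K ⊆ polyDisk R₁ R₂)
    (hK : ∀ p ∈ K, StrictlyMinimalSimpleZero H p) :
    ∃ ε₀ > 0, ∀ ε₁ : ℝ, 0 < ε₁ → ε₁ < ε₀ →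
      ∃ δ₁ > 0, ∀ p ∈ K, ∀ z w : ℂ,
        ‖z‖ = ‖p.1‖ →
        (∃ θ : ℝ, ε₁ ≤ |θ| ∧ |θ| ≤ Real.pi ∧
          z = (‖z‖ : ℂ) * Complex.exp ((θ : ℂ) * Complex.I) *
            (p.1 / (‖p.1‖ : ℂ))) →
        ‖w‖ ≤ (1 + δ₁) * ‖p.2‖ →
        H (z, w) ≠ 0 := by
  refine ⟨1, one_pos, fun ε₁ hε₁ _ => ?_⟩
  have hZ : ∀ q ∈ rotatedArcDisk K ε₁, ContinuousAt H q ∧ H q ≠ 0 := fun q hq => by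
    refine ⟨(hH q (rotatedArcDisk_subset_polyDisk hKD ε₁ hq)).continuousAt, ?_⟩
    obtain ⟨p, hp, θ, hεθ, hθπ, hq₁, hq₂⟩ := exists_of_mem_rotatedArcDisk hq
    rw [← Prod.mk.eta (p := q), hq₁]
    exact (hK p hp).apply_exp_mul_ne_zero (abs_pos.1 (hε₁.trans_le hεθ)) hθπ hq₂
  obtain ⟨δ, hδ, hscale⟩ :=
    Metric.eventually_nhds_iff.1 ((hKcpt.rotatedArcDisk ε₁).eventually_forall_smul_snd_ne_zero hZ)
  refine ⟨δ / 2, half_pos hδ, ?_⟩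
  rintro p hp z w hz ⟨θ, hεθ, hθπ, hzθ⟩ hw
  have hp₁ : p.1 ≠ 0 := left_ne_zero_of_mul (hK p hp).2.2.1
  have hp₂ : p.2 ≠ 0 := right_ne_zero_of_mul (hK p hp).2.2.1
  have hz' : z = exp (θ * I) * p.1 := by
    rw [hzθ, hz]
    field_simp [ofReal_ne_zero.2 (norm_ne_zero_iff.2 hp₁)]
  have hc : (0 : ℝ) < 1 + δ / 2 := by positivity
  have hw' : ‖(1 + δ / 2)⁻¹ • w‖ ≤ ‖p.2‖ := by
    rw [norm_smul, Real.norm_of_nonneg (inv_nonneg.2 hc.le), inv_mul_le_iff₀ hc]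
    exact hw
  have hnear : dist (1 + δ / 2) 1 < δ := by
    rw [Real.dist_eq, add_sub_cancel_left, abs_of_pos (half_pos hδ)]
    exact half_lt_self hδ
  have hne := hscale hnear _ (mem_rotatedArcDisk hp hp₂ hεθ hθπ hw')
  rwa [smul_inv_smul₀ hc.ne', ← hz'] at hne

/-- Lemma 3.1: for all sufficiently small `ε₁ > 0` there is `δ₁ > 0` such that for all
`(ζ,ω) ∈ K`, `H` is zero-free on
`{(z,w) : |z| = |ζ|, |arg(z/ζ)| ≥ ε₁, |w| ≤ (1+δ₁)|ω|}`. -/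
theorem stmt0 (R₁ R₂ : ℝ) (hR₁ : 0 < R₁) (hR₂ : 0 < R₂) (H : ℂ × ℂ → ℂ)
    (hH : AnalyticOnNhd ℂ H (polyDisk R₁ R₂)) (hH0 : H (0, 0) ≠ 0)
    (K : Set (ℂ × ℂ)) (hKcpt : IsCompact K) (hKD : K ⊆ polyDisk R₁ R₂)
    (hK : ∀ p ∈ K, StrictlyMinimalSimpleZero H p) :
    ∃ ε₀ > 0, ∀ ε₁ : ℝ, 0 < ε₁ → ε₁ < ε₀ →
      ∃ δ₁ > 0, ∀ p ∈ K, ∀ z w : ℂ,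
        ‖z‖ = ‖p.1‖ →
        (∃ θ : ℝ, ε₁ ≤ |θ| ∧ |θ| ≤ Real.pi ∧
          z = (‖z‖ : ℂ) * Complex.exp ((θ : ℂ) * Complex.I) *
            (p.1 / (‖p.1‖ : ℂ))) →
        ‖w‖ ≤ (1 + δ₁) * ‖p.2‖ →
        H (z, w) ≠ 0 :=
  stmt0_general R₁ R₂ H hH K hKcpt hKD hK
end

section
/- Let (ζ_c,ω_c) ∈ D be a strictly minimal simple zero of H with H_w(ζ_c,ω_c) ≠ 0, and let w = g(z) be the analytic parametrization of the zero set of H near (ζ_c,ω_c) given by the implicit function theorem (so g(ζ_c) = ω_c and, near (ζ_c,ω_c), H(z,w) = 0 iff w = g(z)). Then for all sufficiently small ε₂ > 0 there exists δ₂ > 0 such that every zero (z,w) of H with |z − ζ_c| < ε₂ and |w| ≤ (1+δ₂)·|g(z)| satisfies w = g(z). -/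
open Complex Filter Topology

/-- Partial derivative of `H` with respect to the second variable. -/
noncomputable def Hw (H : ℂ × ℂ → ℂ) (p : ℂ × ℂ) : ℂ := deriv (fun w => H (p.1, w)) p.2

/-!
Near the fibre `{ζ_c} × {|w| ≤ |ω_c|}` every zero of `H` other than `(ζ_c, ω_c)` is excluded by
strict minimality, and the zero set is closed, so by compactness of that fibre a whole
tube `{|z - ζ_c| < ε, |w| < |ω_c| + ε}` contains no zero outside the neighbourhood on which the
zero set is the graph of `g`. Since `|g(z)|` is close to `|ω_c|` for `z` near `ζ_c`, the condition
`|w| ≤ (1 + δ₂)|g(z)|` puts `(z, w)` in that tube once `δ₂` and `ε₂` are small.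
-/

theorem isOpen_polyDisk (R₁ R₂ : ℝ) : IsOpen (polyDisk R₁ R₂) :=
  (isOpen_lt continuous_fst.norm continuous_const).inter
    (isOpen_lt continuous_snd.norm continuous_const)

section Tube

open Metric

variable {E F G : Type*} [PseudoMetricSpace E] [NormedAddCommGroup F] [NormedSpace ℝ F]

theorem mem_thickening_singleton_prod_closedBall {x z : E} {w : F} {r δ : ℝ} (hr : 0 ≤ r)
    (hz : dist z x < δ) (hw : ‖w‖ < r + δ) :
    (z, w) ∈ thickening δ ({x} ×ˢ closedBall 0 r) := by
  have hδ : 0 < δ := dist_nonneg.trans_lt hz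
  have hw' : w ∈ thickening δ (closedBall 0 r) := by
    rw [thickening_closedBall hδ hr, mem_ball_zero_iff]
    linarith
  obtain ⟨v, hv, hwv⟩ := mem_thickening_iff.mp hw'
  exact mem_thickening_iff.mpr
    ⟨(x, v), ⟨rfl, hv⟩, by rw [Prod.dist_eq]; exact max_lt hz hwv⟩

theorem exists_pos_forall_zero_mem_of_fibre_subset [ProperSpace F] [TopologicalSpace G]
    [Zero G] [T1Space G] {H : E × F → G} {D U : Set (E × F)} (hD : IsOpen D)
    (hH : ContinuousOn H D) (hU : IsOpen U)
    {ζ : E} {ω : F} (hfibre : {ζ} ×ˢ closedBall 0 ‖ω‖ ⊆ D)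
    (hzeros : ∀ w : F, ‖w‖ ≤ ‖ω‖ → H (ζ, w) = 0 → (ζ, w) ∈ U) :
    ∃ ε > 0, ∀ z w, dist z ζ < ε → ‖w‖ < ‖ω‖ + ε → H (z, w) = 0 → (z, w) ∈ U := by
  have hopen : IsOpen (U ∪ D ∩ H ⁻¹' {0}ᶜ) :=
    hU.union (hH.isOpen_inter_preimage hD isOpen_compl_singleton)
  have hcover : {ζ} ×ˢ closedBall 0 ‖ω‖ ⊆ U ∪ D ∩ H ⁻¹' {0}ᶜ := by
    rintro ⟨z, w⟩ ⟨rfl, hw⟩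
    by_cases hzero : H (z, w) = 0
    · exact Or.inl (hzeros w (mem_closedBall_zero_iff.mp hw) hzero)
    · exact Or.inr ⟨hfibre ⟨rfl, hw⟩, hzero⟩
  obtain ⟨ε, hε, hthick⟩ :=
    (isCompact_singleton.prod (isCompact_closedBall 0 ‖ω‖)).exists_thickening_subset_open
      hopen hcover
  refine ⟨ε, hε, fun z w hz hw hzero => ?_⟩
  rcases hthick (mem_thickening_singleton_prod_closedBall (norm_nonneg ω) hz hw) with hU | hne
  · exact hU
  · exact absurd hzero hne.2

end Tube

theorem exists_pos_forall_one_add_mul_norm_lt {E F : Type*} [PseudoMetricSpace E]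
    [SeminormedAddCommGroup F] {g : E → F} {ζ : E} (hg : ContinuousAt g ζ)
    {a : ℝ} (ha : ‖g ζ‖ < a) :
    ∃ r > 0, ∀ z, dist z ζ < r → (1 + r) * ‖g z‖ < a := by
  have hcont : ContinuousAt (fun p : ℝ × E => (1 + p.1) * ‖g p.2‖) (0, ζ) :=
    (continuousAt_const.add continuousAt_fst).mul (hg.comp continuousAt_snd).norm
  have hlt : ∀ᶠ p : ℝ × E in 𝓝 (0, ζ), (1 + p.1) * ‖g p.2‖ < a :=
    hcont.eventually_lt continuousAt_const (by simpa using ha)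
  obtain ⟨r, hr, hball⟩ := Metric.eventually_nhds_iff.mp hlt
  refine ⟨r / 2, half_pos hr, fun z hz => hball (y := (r / 2, z)) ?_⟩
  rw [Prod.dist_eq, Real.dist_0_eq_abs, abs_of_pos (half_pos hr)]
  exact max_lt (half_lt_self hr) (hz.trans (half_lt_self hr))

theorem stmt1_general (R₁ R₂ : ℝ) (H : ℂ × ℂ → ℂ)
    (hH : AnalyticOnNhd ℂ H (polyDisk R₁ R₂))
    (ζc ωc : ℂ) (hD : (ζc, ωc) ∈ polyDisk R₁ R₂)
    (hmin : StrictlyMinimalSimpleZero H (ζc, ωc))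
    (g : ℂ → ℂ) (hg : AnalyticAt ℂ g ζc) (hgc : g ζc = ωc)
    (hparam : ∀ᶠ p : ℂ × ℂ in 𝓝 (ζc, ωc), (H p = 0 ↔ p.2 = g p.1)) :
    ∃ ε₀ > 0, ∀ ε₂ : ℝ, 0 < ε₂ → ε₂ < ε₀ →
      ∃ δ₂ > 0, ∀ z w : ℂ, ‖z - ζc‖ < ε₂ →
        ‖w‖ ≤ (1 + δ₂) * ‖g z‖ → H (z, w) = 0 → w = g z := by
  obtain ⟨U, hUgraph, hUopen, hmemU⟩ := mem_nhds_iff.mp hparam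
  have hfibre : {ζc} ×ˢ Metric.closedBall 0 ‖ωc‖ ⊆ polyDisk R₁ R₂ := by
    rintro ⟨z, w⟩ ⟨rfl, hw⟩
    exact ⟨hD.1, (mem_closedBall_zero_iff.mp hw).trans_lt hD.2⟩
  obtain ⟨ε, hε, htube⟩ := exists_pos_forall_zero_mem_of_fibre_subset (isOpen_polyDisk R₁ R₂)
    hH.continuousOn hUopen hfibre fun w hw hzero => by
      rwa [hmin.2.2.2 (ζc, w) le_rfl hw hzero]
  obtain ⟨r, hr, hgr⟩ := exists_pos_forall_one_add_mul_norm_lt hg.continuousAt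
    (a := ‖ωc‖ + ε) (by rw [hgc]; linarith)
  refine ⟨min ε r, lt_min hε hr, fun ε₂ _ hε₂ => ⟨r, hr, fun z w hz hw hzero => ?_⟩⟩
  have hzr : dist z ζc < min ε r := (dist_eq_norm z ζc).trans_lt (hz.trans hε₂)
  exact (hUgraph (htube z w (hzr.trans_le (min_le_left _ _))
    (hw.trans_lt (hgr z (hzr.trans_le (min_le_right _ _)))) hzero)).mp hzero

/-- Lemma 3.2: for all sufficiently small `ε₂ > 0` there is `δ₂ > 0` such that every zero
`(z,w)` of `H` with `|z − ζ_c| < ε₂` and `|w| ≤ (1+δ₂)|g(z)|` satisfies `w = g(z)`. -/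
theorem stmt1 (R₁ R₂ : ℝ) (hR₁ : 0 < R₁) (hR₂ : 0 < R₂) (H : ℂ × ℂ → ℂ)
    (hH : AnalyticOnNhd ℂ H (polyDisk R₁ R₂)) (hH0 : H (0, 0) ≠ 0)
    (ζc ωc : ℂ) (hD : (ζc, ωc) ∈ polyDisk R₁ R₂)
    (hmin : StrictlyMinimalSimpleZero H (ζc, ωc))
    (hHw : Hw H (ζc, ωc) ≠ 0)
    (g : ℂ → ℂ) (hg : AnalyticAt ℂ g ζc) (hgc : g ζc = ωc)
    (hparam : ∀ᶠ p : ℂ × ℂ in 𝓝 (ζc, ωc), (H p = 0 ↔ p.2 = g p.1)) :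
    ∃ ε₀ > 0, ∀ ε₂ : ℝ, 0 < ε₂ → ε₂ < ε₀ →
      ∃ δ₂ > 0, ∀ z w : ℂ, ‖z - ζc‖ < ε₂ →
        ‖w‖ ≤ (1 + δ₂) * ‖g z‖ → H (z, w) = 0 → w = g z :=
  stmt1_general R₁ R₂ H hH ζc ωc hD hmin g hg hgc hparam
end

section
/- Let H(z,w) := 1 − z − w − zw. For every ζ ∈ (0,1), the point (ζ, (1−ζ)/(1+ζ)) is a strictly minimal simple zero of H; moreover, with ω := (1−ζ)/(1+ζ), a pair (r,s) of positive reals satisfies (r,s) ∈ dir(ζ,ω) if and only if r/s = 2ζ/(1−ζ²), and this holds if and only if ζ = (√(r²+s²) − s)/r and ω = (√(r²+s²) − r)/s. -/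
/-!
On the closed polydisk of radii `x, y > 0` with `x + y + xy = 1`, a zero of `1 − z − w − zw`
satisfies `1 = Re z + Re w + Re (zw) ≤ |z| + |w| + |z||w| ≤ x + y + xy = 1`, so equality holds
throughout: `Re z = |z| = x` and `Re w = |w| = y`, i.e. `(z, w) = (x, y)`. For
`ω = (1 − ζ)/(1 + ζ)` the direction condition becomes `r (1 − ζ²) = 2ζs`, which is exactly
`r² + s² = (rζ + s)²`.
-/

open Complex Filter Topology

/-- Partial derivative of `H` with respect to the first variable. -/
noncomputable def Hz (H : ℂ × ℂ → ℂ) (p : ℂ × ℂ) : ℂ := deriv (fun z => H (z, p.2)) p.1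

/-- The denominator of the Delannoy generating function: `H(z,w) = 1 − z − w − zw`. -/
noncomputable def delH : ℂ × ℂ → ℂ := fun x => 1 - x.1 - x.2 - x.1 * x.2

lemma hasFDerivAt_delH (p : ℂ × ℂ) :
    HasFDerivAt delH (-(1 + p.2) • ContinuousLinearMap.fst ℂ ℂ ℂ
      - (1 + p.1) • ContinuousLinearMap.snd ℂ ℂ ℂ) p := by
  have hz : HasFDerivAt (fun x : ℂ × ℂ => x.1) (ContinuousLinearMap.fst ℂ ℂ ℂ) p := hasFDerivAt_fst
  have hw : HasFDerivAt (fun x : ℂ × ℂ => x.2) (ContinuousLinearMap.snd ℂ ℂ ℂ) p := hasFDerivAt_snd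
  exact ((((hasFDerivAt_const (1 : ℂ) p).sub hz).sub hw).sub (hz.mul hw)).congr_fderiv
    (by ext <;> simp <;> ring)

lemma Hz_delH (p : ℂ × ℂ) : Hz delH p = -(1 + p.2) :=
  ((((hasDerivAt_id p.1).const_sub 1).sub_const p.2).sub
    ((hasDerivAt_id p.1).mul_const p.2)).deriv.trans (by ring)

lemma Hw_delH (p : ℂ × ℂ) : Hw delH p = -(1 + p.1) :=
  ((((hasDerivAt_id p.2).const_sub (1 - p.1))).sub
    ((hasDerivAt_id p.2).const_mul p.1)).deriv.trans (by ring)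

lemma fderiv_delH_ne_zero {p : ℂ × ℂ} (hp : p.2 ≠ -1) : fderiv ℂ delH p ≠ 0 := by
  intro h
  have := congrArg (fun L : ℂ × ℂ →L[ℂ] ℂ => L (1, 0)) ((hasFDerivAt_delH p).fderiv.symm.trans h)
  simp only [neg_add_rev, sub_apply, smul_apply, ContinuousLinearMap.coe_fst', smul_eq_mul, mul_one,
    ContinuousLinearMap.coe_snd', mul_zero, sub_zero, zero_apply] at this
  exact hp (by linear_combination -this)

lemma Complex.eq_ofReal_of_norm_le_of_re_eq {z : ℂ} {x : ℝ} (hz : ‖z‖ ≤ x) (hre : z.re = x) :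
    z = x := by
  have hnorm : z.re = ‖z‖ := le_antisymm (re_le_norm z) (hre ▸ hz)
  rw [eq_coe_norm_of_nonneg (re_eq_norm.mp hnorm), ← hnorm, hre]

lemma eq_of_delH_eq_zero_of_norm_le {x y : ℝ} (hx : 0 ≤ x) (hxy : x + y + x * y = 1) {z w : ℂ}
    (hz : ‖z‖ ≤ x) (hw : ‖w‖ ≤ y) (h : delH (z, w) = 0) : z = x ∧ w = y := by
  have hre : z.re + w.re + (z * w).re = 1 := by
    have := congrArg re h
    simp only [delH, sub_re, one_re, zero_re] at this
    linarith
  have hzw : (z * w).re ≤ x * y := calc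
    (z * w).re ≤ ‖z‖ * ‖w‖ := (re_le_norm _).trans_eq (norm_mul z w)
    _ ≤ x * y := mul_le_mul hz hw (norm_nonneg w) hx
  have hzx := (re_le_norm z).trans hz
  have hwy := (re_le_norm w).trans hw
  exact ⟨eq_ofReal_of_norm_le_of_re_eq hz (by linarith),
    eq_ofReal_of_norm_le_of_re_eq hw (by linarith)⟩

lemma strictlyMinimalSimpleZero_delH {x y : ℝ} (hx : 0 < x) (hy : 0 < y)
    (hxy : x + y + x * y = 1) : StrictlyMinimalSimpleZero delH ((x : ℂ), (y : ℂ)) := by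
  refine ⟨?_, fderiv_delH_ne_zero ?_, by simp [hx.ne', hy.ne'], ?_⟩
  · have : ((x + y + x * y : ℝ) : ℂ) = 1 := by exact_mod_cast hxy
    push_cast at this
    simp only [delH]
    linear_combination -this
  · show (y : ℂ) ≠ -1
    exact_mod_cast (by linarith : y ≠ -1)
  · rintro ⟨z, w⟩ hz hw h
    rw [norm_real, Real.norm_of_nonneg hx.le] at hz
    rw [norm_real, Real.norm_of_nonneg hy.le] at hw
    obtain ⟨rfl, rfl⟩ := eq_of_delH_eq_zero_of_norm_le hx.le hxy hz hw h
    rfl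

lemma dir_delH_iff (x y r s : ℝ) :
    (r : ℂ) * y * Hw delH (x, y) - s * x * Hz delH (x, y) = 0 ↔
      r * y * (1 + x) = s * x * (1 + y) := by
  have : (r : ℂ) * y * Hw delH (x, y) - s * x * Hz delH (x, y)
      = -((r * y * (1 + x) - s * x * (1 + y) : ℝ) : ℂ) := by
    rw [Hw_delH, Hz_delH]
    push_cast
    ring
  rw [this, neg_eq_zero, ofReal_eq_zero, sub_eq_zero]

lemma delannoy_direction_iff {ζ r s : ℝ} (hζ : 0 < 1 + ζ) :
    r * ((1 - ζ) / (1 + ζ)) * (1 + ζ) = s * ζ * (1 + (1 - ζ) / (1 + ζ)) ↔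
      r * (1 - ζ ^ 2) = 2 * ζ * s := by
  field_simp
  constructor <;> intro h <;> linear_combination h

lemma sqrt_sq_add_sq_eq_iff {r s ζ : ℝ} (hr : 0 < r) (hs : 0 < s) (hζ : 0 ≤ ζ) :
    √(r ^ 2 + s ^ 2) = r * ζ + s ↔ r * (1 - ζ ^ 2) = 2 * ζ * s := by
  rw [Real.sqrt_eq_iff_eq_sq (by positivity) (by positivity)]
  constructor <;> intro h
  · exact mul_left_cancel₀ hr.ne' (by linear_combination h)
  · linear_combination r * h

lemma eq_sqrt_sq_add_sq_iff {r s ζ : ℝ} (hr : 0 < r) (hs : 0 < s) (hζ : 0 ≤ ζ) :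
    r * (1 - ζ ^ 2) = 2 * ζ * s ↔
      ζ = (√(r ^ 2 + s ^ 2) - s) / r ∧ (1 - ζ) / (1 + ζ) = (√(r ^ 2 + s ^ 2) - r) / s := by
  rw [eq_div_iff hr.ne', div_eq_div_iff (by linarith) hs.ne']
  constructor
  · intro h
    rw [(sqrt_sq_add_sq_eq_iff hr hs hζ).mpr h]
    exact ⟨by ring, by linear_combination h⟩
  · rintro ⟨h, -⟩
    exact (sqrt_sq_add_sq_eq_iff hr hs hζ).mp (by linarith)

/-- Application 1 (Lattice paths): for `ζ ∈ (0,1)` and `ω = (1−ζ)/(1+ζ)`, the point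
`(ζ,ω)` is a strictly minimal simple zero of `1−z−w−zw`; moreover positive reals `(r,s)`
satisfy `(r,s) ∈ dir(ζ,ω)` iff `r/s = 2ζ/(1−ζ²)`, iff `ζ = (√(r²+s²)−s)/r` and
`ω = (√(r²+s²)−r)/s`. -/
theorem stmt11 (ζ : ℝ) (hζ0 : 0 < ζ) (hζ1 : ζ < 1) :
    StrictlyMinimalSimpleZero delH ((ζ : ℂ), (((1 - ζ) / (1 + ζ) : ℝ) : ℂ)) ∧
    ∀ r s : ℝ, 0 < r → 0 < s →
      (((r : ℂ) * (((1 - ζ) / (1 + ζ) : ℝ) : ℂ) * Hw delH ((ζ : ℂ), (((1 - ζ) / (1 + ζ) : ℝ) : ℂ))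
          - (s : ℂ) * (ζ : ℂ) * Hz delH ((ζ : ℂ), (((1 - ζ) / (1 + ζ) : ℝ) : ℂ)) = 0) ↔
        r / s = 2 * ζ / (1 - ζ ^ 2)) ∧
      (r / s = 2 * ζ / (1 - ζ ^ 2) ↔
        (ζ = (Real.sqrt (r ^ 2 + s ^ 2) - s) / r ∧
          (1 - ζ) / (1 + ζ) = (Real.sqrt (r ^ 2 + s ^ 2) - r) / s)) := by
  have hζ : 0 < 1 + ζ := by linarith
  have hω : 0 < (1 - ζ) / (1 + ζ) := div_pos (by linarith) hζ
  have hzero : ζ + (1 - ζ) / (1 + ζ) + ζ * ((1 - ζ) / (1 + ζ)) = 1 := by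
    field_simp
    ring
  refine ⟨strictlyMinimalSimpleZero_delH hζ0 hω hzero, fun r s hr hs => ?_⟩
  have hratio : r / s = 2 * ζ / (1 - ζ ^ 2) ↔ r * (1 - ζ ^ 2) = 2 * ζ * s := by
    rw [div_eq_div_iff hs.ne' (by nlinarith), mul_comm (2 * ζ)]
  rw [dir_delH_iff, delannoy_direction_iff hζ, hratio]
  exact ⟨Iff.rfl, eq_sqrt_sq_add_sq_iff hr hs hζ0.le⟩
end
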